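/- Let (Θ, Ω, f : Θ → Z) be a cardinal implementation problem such that f is surjective and Θ^una ∩ Θ^strict ⊆ Θ ⊆ Θ^strict. Then the following three statements are equivalent: (i) f can be UD-implemented by a deterministic finite-action mechanism; (ii) f can be UD^∞-implemented by a deterministic finite-action mechanism; (iii) f is dictatorial. -/
import Mathlib


open Function

noncomputable section

/-- A lottery (probability distribution) on the finite outcome set `Z`. -/
def Lottery (Z : Type) [Fintype Z] : Type :=
  {y : Z → ℝ // (∀ z, 0 ≤ y z) ∧ ∑ z, y z = 1}

variable {Z : Type} [Fintype Z]

/-- The degenerate lottery on the outcome `z`. -/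
def Lottery.delta [DecidableEq Z] (z : Z) : Lottery Z :=
  ⟨fun z' => if z' = z then 1 else 0, fun z' => by positivity, by simp⟩

/-- Expected utility of the lottery `y` under the vN-M utility function `u`. -/
def expUtil (u : Z → ℝ) (y : Lottery Z) : ℝ := ∑ z, y.1 z * u z

variable {I : Type} [DecidableEq I] {S : I → Type}

/-- `s_i` is strictly dominated (for agent `i`, at cardinal state `u`, in the mechanism
with outcome function `g`) on the product set `×_j T j`. -/
def Dominated (u : I → Z → ℝ) (g : (∀ i, S i) → Lottery Z)
    (T : ∀ j, Set (S j)) (i : I) (si : S i) : Prop :=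
  ∃ si' : S i, ∀ s : ∀ j, S j, (∀ j, j ≠ i → s j ∈ T j) →
    expUtil (u i) (g (update s i si)) < expUtil (u i) (g (update s i si'))

/-- `UDk u g k i` is the set of strategies of agent `i` surviving `k` rounds of iterative
deletion of strictly dominated strategies at the cardinal state `u` (`UDk u g 0 i = S i`). -/
def UDk (u : I → Z → ℝ) (g : (∀ i, S i) → Lottery Z) : ℕ → ∀ i, Set (S i)
  | 0 => fun _ => Set.univ
  | (k + 1) => fun i => {si ∈ UDk u g k i | ¬ Dominated u g (UDk u g k) i si}

/-- `UD(M,u)`: profiles surviving one round of deletion. -/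
def UDoneSet (u : I → Z → ℝ) (g : (∀ i, S i) → Lottery Z) : Set (∀ i, S i) :=
  {s | ∀ i, s i ∈ UDk u g 1 i}

/-- `UD^∞(M,u)`: profiles surviving iterative deletion (all rounds `k ≥ 1`). -/
def UDinfSet (u : I → Z → ℝ) (g : (∀ i, S i) → Lottery Z) : Set (∀ i, S i) :=
  {s | ∀ i, ∀ k : ℕ, s i ∈ UDk u g (k + 1) i}

/-- `S_i^z`: strategies of agent `i` from which the degenerate outcome `z` is reachable. -/
def Sz [DecidableEq Z] (g : (∀ i, S i) → Lottery Z) (i : I) (z : Z) : Set (S i) :=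
  {si | ∃ s : ∀ j, S j, s i = si ∧ g s = Lottery.delta z}

/-- `×_j T j` satisfies the non-domination property at `u`. -/
def NonDomProp (u : I → Z → ℝ) (g : (∀ i, S i) → Lottery Z) (T : ∀ j, Set (S j)) : Prop :=
  ∀ i, ∀ si ∈ T i, ∀ si' : S i, ∃ s : ∀ j, S j, (∀ j, j ≠ i → s j ∈ T j) ∧
    expUtil (u i) (g (update s i si')) ≤ expUtil (u i) (g (update s i si))

/-- `u` is a cardinal representation of the ordinal state `θ`. -/
def Represents (u : I → Z → ℝ) (θ : I → Z → Z → Prop) : Prop :=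
  ∀ i z z', θ i z z' ↔ u i z' ≤ u i z

/-- `Θ*`: all ordinal states (complete and transitive preference profiles). -/
def ThetaStar (I Z : Type) : Set (I → Z → Z → Prop) :=
  {θ | ∀ i, (∀ z z', θ i z z' ∨ θ i z' z) ∧ Transitive (θ i)}

/-- `Θ^una`: ordinal states where all agents have identical preferences. -/
def ThetaUna (I Z : Type) : Set (I → Z → Z → Prop) :=
  {θ ∈ ThetaStar I Z | ∀ i j z z', θ i z z' ↔ θ j z z'}

/-- `Θ^strict`: ordinal states where no agent has non-trivial indifference. -/
def ThetaStrict (I Z : Type) : Set (I → Z → Z → Prop) :=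
  {θ ∈ ThetaStar I Z | ∀ i z z', θ i z z' → θ i z' z → z = z'}

/-- The strict part `≻_i^θ`. -/
def StrictPref (θ : I → Z → Z → Prop) (i : I) (z z' : Z) : Prop := θ i z z' ∧ ¬ θ i z' z

/-- Agent `i` is a dictator for `f` on `Θ`. -/
def Dictator (Θ : Set (I → Z → Z → Prop)) (f : (I → Z → Z → Prop) → Z) (i : I) : Prop :=
  ∀ θ ∈ Θ, ∀ z, z ≠ f θ → StrictPref θ i (f θ) z

/-- `(Θ, Ω)` form a cardinal implementation problem: `Θ` is a set of ordinal states, every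
member of `Ω` is a cardinal representation of some `θ ∈ Θ`, and `Ω_θ ≠ ∅` for all `θ ∈ Θ`. -/
def CIProblem (Θ : Set (I → Z → Z → Prop)) (Ω : Set (I → Z → ℝ)) : Prop :=
  Θ ⊆ ThetaStar I Z ∧ (∀ u ∈ Ω, ∃ θ ∈ Θ, Represents u θ) ∧
    ∀ θ ∈ Θ, ∃ u ∈ Ω, Represents u θ

/-- `f` is UD-implemented by the mechanism with outcome function `g`. -/
def UDImplements [DecidableEq Z] (Θ : Set (I → Z → Z → Prop)) (Ω : Set (I → Z → ℝ))
    (f : (I → Z → Z → Prop) → Z) (g : (∀ i, S i) → Lottery Z) : Prop :=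
  ∀ θ ∈ Θ, ∀ u ∈ Ω, Represents u θ → g '' UDoneSet u g = {Lottery.delta (f θ)}

/-- `f` is UD^∞-implemented by the mechanism with outcome function `g`. -/
def UDinfImplements [DecidableEq Z] (Θ : Set (I → Z → Z → Prop)) (Ω : Set (I → Z → ℝ))
    (f : (I → Z → Z → Prop) → Z) (g : (∀ i, S i) → Lottery Z) : Prop :=
  ∀ θ ∈ Θ, ∀ u ∈ Ω, Represents u θ → g '' UDinfSet u g = {Lottery.delta (f θ)}

/-- `Θ^{(i1,i2)-z}`: strict states where `z` is second-best for both `i1` and `i2`,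
whose top-ranked outcomes differ. -/
def ThetaSecond [Fintype Z] (i1 i2 : I) (z : Z) : Set (I → Z → Z → Prop) :=
  {θ ∈ ThetaStrict I Z |
    Set.ncard {z' | θ i1 z z'} = Fintype.card Z - 1 ∧
    Set.ncard {z' | θ i2 z z'} = Fintype.card Z - 1 ∧
    {z' | θ i1 z z'} ≠ {z' | θ i2 z z'}}

end

section Aux

open Function Set

variable {Z : Type} [Fintype Z] [DecidableEq Z]

lemma expUtil_delta (u : Z → ℝ) (z : Z) : expUtil u (Lottery.delta z) = u z := by
  simp [expUtil, Lottery.delta, ite_mul]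

lemma Lottery.delta_inj {z z' : Z} (h : Lottery.delta z = Lottery.delta z') : z = z' := by
  by_contra hne
  have := congrArg (fun y : Lottery Z => y.1 z) h
  simp [Lottery.delta, hne] at this

variable {I : Type} [DecidableEq I] {S : I → Type}

/-- Bundle of the four properties of a "surviving set family" used in the hard direction. -/
def GoodT (g : (∀ i, S i) → Lottery Z) (w : Z) (u : I → Z → ℝ) (T : ∀ i, Set (S i)) : Prop :=
  (∀ s, (∀ i, s i ∈ T i) → g s = Lottery.delta w) ∧
  (∀ i, (T i).Nonempty) ∧
  (∀ i (x : S i), ∃ y, y ∈ T i ∧ ∀ s : ∀ j, S j, (∀ j, j ≠ i → s j ∈ T j) →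
      expUtil (u i) (g (Function.update s i x)) ≤ expUtil (u i) (g (Function.update s i y))) ∧
  (∀ p : ∀ j, S j, (∀ (m : I) (d : S m),
      expUtil (u m) (g (Function.update p m d)) ≤ expUtil (u m) (g p)) → ∀ i, p i ∈ T i)

end Aux
section Aux2

open Function Set

variable {I Z : Type} [Fintype Z] [DecidableEq Z]

/-- Existence of a unanimous strict state (hence in `Θ`) with top `x` and second-best `z`,
together with a cardinal representation in `Ω`. -/
lemma exists_unanimous_state
    (Θ : Set (I → Z → Z → Prop)) (Ω : Set (I → Z → ℝ))
    (hCIP : CIProblem Θ Ω) (hsub1 : ThetaUna I Z ∩ ThetaStrict I Z ⊆ Θ)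
    {x z : Z} (hxz : x ≠ z) :
    ∃ θ ∈ Θ, ∃ u ∈ Ω, Represents u θ ∧
      (∀ (i : I) (y : Z), u i y ≤ u i x) ∧ (∀ (i : I) (y : Z), y ≠ x → u i y ≤ u i z) := by
  classical
  set n := Fintype.card Z with hn
  let e := Fintype.equivFin Z
  set rk : Z → ℕ := fun y => if y = x then n + 2 else if y = z then n + 1 else (e y : ℕ)
    with hrk
  have hbase : ∀ y, y ≠ x → y ≠ z → rk y = (e y : ℕ) := by
    intro y h1 h2; simp [hrk, h1, h2]
  have hlt : ∀ y, y ≠ x → y ≠ z → rk y < n := by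
    intro y h1 h2; rw [hbase y h1 h2]; exact (e y).2
  have hrx : rk x = n + 2 := by simp [hrk]
  have hrz : rk z = n + 1 := by simp [hrk, hxz.symm]
  have hinj : Function.Injective rk := by
    intro a b hab
    by_cases ha : a = x <;> by_cases hb : b = x
    · rw [ha, hb]
    · subst ha; by_cases hbz : b = z
      · subst hbz; rw [hrx, hrz] at hab; omega
      · rw [hrx, hbase b hb hbz] at hab; have := (e b).2; omega
    · subst hb; by_cases haz : a = z
      · subst haz; rw [hrx, hrz] at hab; omega
      · rw [hrx, hbase a ha haz] at hab; have := (e a).2; omega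
    · by_cases haz : a = z <;> by_cases hbz : b = z
      · rw [haz, hbz]
      · subst haz; rw [hrz, hbase b hb hbz] at hab; have := (e b).2; omega
      · subst hbz; rw [hrz, hbase a ha haz] at hab; have := (e a).2; omega
      · rw [hbase a ha haz, hbase b hb hbz] at hab
        exact e.injective (Fin.val_injective hab)
  set θ : I → Z → Z → Prop := fun _ a b => rk b ≤ rk a with hθdef
  have hθstar : θ ∈ ThetaStar I Z := by
    intro i
    exact ⟨fun a b => le_total (rk b) (rk a), fun a b c hab hbc => le_trans hbc hab⟩
  have hθΘ : θ ∈ Θ := by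
    apply hsub1
    constructor
    · exact ⟨hθstar, fun i j a b => Iff.rfl⟩
    · exact ⟨hθstar, fun i a b h1 h2 => hinj (le_antisymm h2 h1)⟩
  obtain ⟨u, hu, hrep⟩ := hCIP.2.2 θ hθΘ
  refine ⟨θ, hθΘ, u, hu, hrep, ?_, ?_⟩
  · intro i y
    refine (hrep i x y).mp ?_
    show rk y ≤ rk x
    rw [hrx]
    by_cases hy : y = x
    · rw [hy, hrx]
    · by_cases hyz : y = z
      · rw [hyz, hrz]; omega
      · have := hlt y hy hyz; omega
  · intro i y hy
    refine (hrep i z y).mp ?_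
    show rk y ≤ rk z
    rw [hrz]
    by_cases hyz : y = z
    · rw [hyz, hrz]
    · have := hlt y hy hyz; omega

end Aux2
section Hard

open Function Set

variable {I Z : Type} [Fintype I] [Fintype Z] [DecidableEq I] [DecidableEq Z]

lemma hard_core
    (hZ : 2 ≤ Fintype.card Z)
    (Θ : Set (I → Z → Z → Prop)) (Ω : Set (I → Z → ℝ)) (f : (I → Z → Z → Prop) → Z)
    (hCIP : CIProblem Θ Ω) (hsurj : ∀ z : Z, ∃ θ ∈ Θ, f θ = z)
    (hsub1 : ThetaUna I Z ∩ ThetaStrict I Z ⊆ Θ) (hsub2 : Θ ⊆ ThetaStrict I Z)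
    {S : I → Type} [∀ i, Nonempty (S i)]
    (g : (∀ i, S i) → Lottery Z)
    (hdet : ∀ s, ∃ z : Z, g s = Lottery.delta z)
    (H : ∀ θ ∈ Θ, ∀ u ∈ Ω, Represents u θ → ∃ T : ∀ i, Set (S i), GoodT g (f θ) u T) :
    ∃ i : I, Dictator Θ f i := by
  classical
  choose out hout using hdet
  have out_eq : ∀ s z, g s = Lottery.delta z → out s = z := fun s z h =>
    Lottery.delta_inj ((hout s).symm.trans h)
  -- every outcome is reachable
  have reach : ∀ z : Z, ∃ p : ∀ i, S i, out p = z := by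
    intro z
    obtain ⟨θ, hθ, hfθ⟩ := hsurj z
    obtain ⟨u, hu, hrep⟩ := hCIP.2.2 θ hθ
    obtain ⟨T, hT1, hT2, -, -⟩ := H θ hθ u hu hrep
    refine ⟨fun i => (hT2 i).choose, ?_⟩
    have := hT1 _ (fun i => (hT2 i).choose_spec)
    rw [hfθ] at this
    exact out_eq _ _ this
  -- survival of common-top-achieving profiles
  have surv_top : ∀ (u : I → Z → ℝ) (T : ∀ i, Set (S i)) (w x : Z), GoodT g w u T →
      (∀ (i : I) (y : Z), u i y ≤ u i x) →
      ∀ q : ∀ i, S i, out q = x → ∀ i, q i ∈ T i := by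
    intro u T w x hG hutop q hq
    refine hG.2.2.2 q ?_
    intro m d
    rw [hout q, hout (Function.update q m d), hq, expUtil_delta, expUtil_delta]
    exact hutop m _
  have ftop : ∀ θ ∈ Θ, ∀ (u : I → Z → ℝ) (T : ∀ i, Set (S i)) (x : Z),
      GoodT g (f θ) u T → (∀ (i : I) (y : Z), u i y ≤ u i x) → f θ = x := by
    intro θ hθ u T x hG hutop
    obtain ⟨px, hpx⟩ := reach x
    have hmem := surv_top u T (f θ) x hG hutop px hpx
    have := hG.1 px hmem
    rw [← hpx]
    exact (out_eq _ _ this).symm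
  -- reachability relation
  set Rr : ∀ i : I, S i → Z → Prop := fun i si x => ∃ q : ∀ j, S j, q i = si ∧ out q = x
    with hRr
  -- box fact
  have box : ∀ (x : Z) (p : ∀ i, S i), (∀ i, Rr i (p i) x) → out p = x := by
    intro x p hp
    obtain ⟨z, hz⟩ := Fintype.exists_ne_of_one_lt_card (by omega) x
    obtain ⟨θ, hθ, u, hu, hrep, hutop, -⟩ :=
      exists_unanimous_state Θ Ω hCIP hsub1 (Ne.symm hz)
    obtain ⟨T, hG⟩ := H θ hθ u hu hrep
    have hfx : f θ = x := ftop θ hθ u T x hG hutop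
    have hmem : ∀ i, p i ∈ T i := by
      intro i
      obtain ⟨q, hq1, hq2⟩ := hp i
      have := surv_top u T (f θ) x hG hutop q hq2 i
      rwa [hq1] at this
    have := hG.1 p hmem
    rw [hfx] at this
    exact out_eq _ _ this
  -- master fact
  have MF : ∀ (p : ∀ i, S i) (x : Z), x ≠ out p →
      ∃ (m : I) (d : S m), out (Function.update p m d) = x := by
    intro p x hx
    by_contra hc
    push_neg at hc
    obtain ⟨θ, hθ, u, hu, hrep, hutop, husec⟩ :=
      exists_unanimous_state Θ Ω hCIP hsub1 hx
    obtain ⟨T, hG⟩ := H θ hθ u hu hrep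
    have hfx : f θ = x := ftop θ hθ u T x hG hutop
    have hmem : ∀ i, p i ∈ T i := by
      refine hG.2.2.2 p ?_
      intro m d
      rw [hout p, hout (Function.update p m d), expUtil_delta, expUtil_delta]
      exact husec m _ (hc m d)
    have := hG.1 p hmem
    rw [hfx] at this
    exact hx (out_eq _ _ this).symm
  -- covering with deviation witness
  have Hcov : ∀ (p : ∀ i, S i) (x : Z), x ≠ out p →
      ∃ m : I, ¬ Rr m (p m) x ∧ ∃ d : S m, out (Function.update p m d) = x := by
    intro p x hx
    obtain ⟨m, d, hmd⟩ := MF p x hx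
    refine ⟨m, ?_, d, hmd⟩
    intro hmem
    apply hx
    refine (box x p ?_).symm
    intro k
    by_cases hk : k = m
    · subst hk; exact hmem
    · exact ⟨Function.update p m d, Function.update_of_ne hk _ _, hmd⟩
  -- at most one agent can exclude a given outcome at a given profile
  have Hdisj : ∀ (p : ∀ i, S i) (x : Z) (i j : I), i ≠ j →
      ¬ Rr i (p i) x → ¬ Rr j (p j) x → False := by
    intro p x i j hij hi hj
    have hx : x ≠ out p := fun h => hi ⟨p, rfl, h.symm⟩
    obtain ⟨m, d, hmd⟩ := MF p x hx
    have hk : ∀ k, k ≠ m → Rr k (p k) x :=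
      fun k hkm => ⟨Function.update p m d, Function.update_of_ne hkm _ _, hmd⟩
    by_cases him : i = m
    · subst him; exact hj (hk j (Ne.symm hij))
    · exact hi (hk i him)
  -- no two distinct agents both possess "blocking" strategies
  have unique_nf : ∀ (i j : I) (yi : S i) (yj : S j) (xi xj : Z), i ≠ j →
      ¬ Rr i yi xi → ¬ Rr j yj xj → False := by
    intro i j yi yj xi xj hij hi hj
    have p0 : ∀ k, S k := fun k => Classical.arbitrary _
    set p : ∀ k, S k := Function.update (Function.update p0 i yi) j yj with hp
    have hpi : p i = yi := by
      rw [hp, Function.update_of_ne hij, Function.update_self]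
    have hpj : p j = yj := by rw [hp, Function.update_self]
    -- deviation realizing xi must come from agent i
    have hdev : ∀ (x : Z) (k : I) (yk : S k), p k = yk → ¬ Rr k yk x →
        ∃ d : S k, out (Function.update p k d) = x ∧ ¬ Rr k d (out p) := by
      intro x k yk hpk hnk
      have hxk : ¬ Rr k (p k) x := by rw [hpk]; exact hnk
      have hx : x ≠ out p := fun h => hxk ⟨p, rfl, h.symm⟩
      obtain ⟨m, hm, d, hmd⟩ := Hcov p x hx
      have hmk : m = k := by
        by_contra hne
        exact Hdisj p x m k hne hm hxk
      subst hmk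
      refine ⟨d, hmd, ?_⟩
      intro hmem
      have : out (Function.update p m d) = out p := by
        apply box
        intro k'
        by_cases hk' : k' = m
        · subst hk'; rw [Function.update_self]; exact hmem
        · rw [Function.update_of_ne hk']; exact ⟨p, rfl, rfl⟩
      rw [this] at hmd
      exact hx hmd.symm
    obtain ⟨di, hdi, hdi2⟩ := hdev xi i yi hpi hi
    obtain ⟨dj, hdj, hdj2⟩ := hdev xj j yj hpj hj
    -- double deviation profile
    set q : ∀ k, S k := Function.update (Function.update p i di) j dj with hq
    have hqi : q i = di := by rw [hq, Function.update_of_ne hij, Function.update_self]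
    have hqj : q j = dj := by rw [hq, Function.update_self]
    refine Hdisj q (out p) i j hij ?_ ?_
    · rw [hqi]; exact hdi2
    · rw [hqj]; exact hdj2
  -- extract the unique "non-full" agent
  have hex : ∃ (i : I) (si : S i) (x : Z), ¬ Rr i si x := by
    have p0 : ∀ k, S k := fun k => Classical.arbitrary _
    obtain ⟨x, hx⟩ := Fintype.exists_ne_of_one_lt_card (by omega) (out p0)
    obtain ⟨m, hm, -⟩ := Hcov p0 x hx
    exact ⟨m, p0 m, x, hm⟩
  obtain ⟨i₀, y₀, x₀, h₀⟩ := hex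
  have hfull : ∀ j, j ≠ i₀ → ∀ (sj : S j) (x : Z), Rr j sj x := by
    intro j hj sj x
    by_contra hc
    exact unique_nf i₀ j y₀ sj x₀ x (Ne.symm hj) h₀ hc
  -- i₀ is a dictator
  refine ⟨i₀, ?_⟩
  intro θ hθ z hz
  obtain ⟨u, hu, hrep⟩ := hCIP.2.2 θ hθ
  obtain ⟨T, hG⟩ := H θ hθ u hu hrep
  have ht : ∀ j, (hG.2.1 j).choose ∈ T j := fun j => (hG.2.1 j).choose_spec
  set t : ∀ j, S j := fun j => (hG.2.1 j).choose with htdef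
  have key : ∀ w : Z, u i₀ w ≤ u i₀ (f θ) := by
    intro w
    obtain ⟨pw, hpw⟩ := reach w
    have hw : out (Function.update t i₀ (pw i₀)) = w := by
      apply box
      intro k
      by_cases hk : k = i₀
      · subst hk; rw [Function.update_self]; exact ⟨pw, rfl, hpw⟩
      · rw [Function.update_of_ne hk]; exact hfull k hk _ w
    obtain ⟨y, hyT, hy⟩ := hG.2.2.1 i₀ (pw i₀)
    have h1 := hy t (fun j _ => ht j)
    have h2 : g (Function.update t i₀ y) = Lottery.delta (f θ) := by
      apply hG.1
      intro j
      by_cases hj : j = i₀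
      · subst hj; rw [Function.update_self]; exact hyT
      · rw [Function.update_of_ne hj]; exact ht j
    rw [hout (Function.update t i₀ (pw i₀)), hw, expUtil_delta, h2, expUtil_delta] at h1
    exact h1
  constructor
  · exact (hrep i₀ (f θ) z).mpr (key z)
  · intro hzf
    exact hz ((hsub2 hθ).2 i₀ z (f θ) hzf ((hrep i₀ (f θ) z).mpr (key z)))

end Hard
section InstUD

open Function Set

variable {I Z : Type} [Fintype Z] [DecidableEq I] [DecidableEq Z]
variable {S : I → Type}

lemma UDk_zero (u : I → Z → ℝ) (g : (∀ i, S i) → Lottery Z) (i : I) :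
    UDk u g 0 i = Set.univ := rfl

lemma UDk_succ (u : I → Z → ℝ) (g : (∀ i, S i) → Lottery Z) (k : ℕ) (i : I) :
    UDk u g (k + 1) i = {si ∈ UDk u g k i | ¬ Dominated u g (UDk u g k) i si} := rfl

lemma H_of_UD [∀ i, Finite (S i)] [∀ i, Nonempty (S i)]
    (Θ : Set (I → Z → Z → Prop)) (Ω : Set (I → Z → ℝ)) (f : (I → Z → Z → Prop) → Z)
    (g : (∀ i, S i) → Lottery Z) (himpl : UDImplements Θ Ω f g) :
    ∀ θ ∈ Θ, ∀ u ∈ Ω, Represents u θ → ∃ T : ∀ i, Set (S i), GoodT g (f θ) u T := by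
  classical
  intro θ hθ u hu hrep
  have himg := himpl θ hθ u hu hrep
  refine ⟨fun i => UDk u g 1 i, ?_, ?_, ?_, ?_⟩
  · -- T1
    intro s hs
    have : g s ∈ g '' UDoneSet u g := ⟨s, hs, rfl⟩
    rw [himg] at this
    exact this
  · -- T2
    intro i
    have : Lottery.delta (f θ) ∈ g '' UDoneSet u g := by rw [himg]; exact rfl
    obtain ⟨s, hs, -⟩ := this
    exact ⟨s i, hs i⟩
  · -- T3
    intro i x
    set r : S i → S i → Prop := fun a b => ∀ s : ∀ j, S j,
      expUtil (u i) (g (Function.update s i b)) < expUtil (u i) (g (Function.update s i a))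
      with hrdef
    haveI : IsTrans (S i) r := ⟨fun a b c hab hbc s => lt_trans (hbc s) (hab s)⟩
    haveI : IsIrrefl (S i) r := ⟨fun a ha => lt_irrefl _ (ha (Classical.arbitrary _))⟩
    have hwf : WellFounded r := Finite.wellFounded_of_trans_of_irrefl r
    have main : ∀ x : S i, ∃ y, y ∈ UDk u g 1 i ∧ ∀ s : ∀ j, S j,
        expUtil (u i) (g (Function.update s i x)) ≤ expUtil (u i) (g (Function.update s i y)) := by
      intro x
      induction x using hwf.induction with
      | _ x ih =>
        by_cases hdom : Dominated u g (UDk u g 0) i x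
        · obtain ⟨d, hd⟩ := hdom
          have hdx : r d x := fun s => hd s (fun j _ => Set.mem_univ _)
          obtain ⟨y, hy1, hy2⟩ := ih d hdx
          exact ⟨y, hy1, fun s => le_trans (le_of_lt (hdx s)) (hy2 s)⟩
        · exact ⟨x, ⟨Set.mem_univ _, hdom⟩, fun s => le_refl _⟩
    obtain ⟨y, hy1, hy2⟩ := main x
    exact ⟨y, hy1, fun s _ => hy2 s⟩
  · -- T4'
    intro p hnash i
    refine ⟨Set.mem_univ _, ?_⟩
    rintro ⟨d, hd⟩
    have := hd p (fun j _ => Set.mem_univ _)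
    rw [Function.update_eq_self] at this
    exact absurd (hnash i d) (not_le.mpr this)

end InstUD
section InstUDinf

open Function Set

variable {I Z : Type} [Fintype I] [Fintype Z] [DecidableEq I] [DecidableEq Z]
variable {S : I → Type}

lemma UDk_succ_subset (u : I → Z → ℝ) (g : (∀ i, S i) → Lottery Z) (k : ℕ) (i : I) :
    UDk u g (k + 1) i ⊆ UDk u g k i := fun _ h => h.1

lemma UDk_antitone (u : I → Z → ℝ) (g : (∀ i, S i) → Lottery Z) {k l : ℕ} (h : k ≤ l) (i : I) :
    UDk u g l i ⊆ UDk u g k i := by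
  induction h with
  | refl => exact subset_rfl
  | step h ih => exact (UDk_succ_subset u g _ i).trans ih

lemma H_of_UDinf [∀ i, Finite (S i)] [∀ i, Nonempty (S i)]
    (Θ : Set (I → Z → Z → Prop)) (Ω : Set (I → Z → ℝ)) (f : (I → Z → Z → Prop) → Z)
    (g : (∀ i, S i) → Lottery Z) (himpl : UDinfImplements Θ Ω f g) :
    ∀ θ ∈ Θ, ∀ u ∈ Ω, Represents u θ → ∃ T : ∀ i, Set (S i), GoodT g (f θ) u T := by
  classical
  intro θ hθ u hu hrep
  have himg := himpl θ hθ u hu hrep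
  -- stabilization
  have hncard_mono : ∀ k, ∀ i : I,
      (UDk u g (k + 1) i).ncard ≤ (UDk u g k i).ncard :=
    fun k i => Set.ncard_le_ncard (UDk_succ_subset u g k i) (Set.toFinite _)
  set N : ℕ → ℕ := fun k => ∑ i : I, (UDk u g k i).ncard with hN
  have hNmono : ∀ k, N (k + 1) ≤ N k :=
    fun k => Finset.sum_le_sum (fun i _ => hncard_mono k i)
  obtain ⟨K, hK1, hKeq⟩ : ∃ K, 1 ≤ K ∧ N (K + 1) = N K := by
    by_contra hc
    push_neg at hc
    have hlt : ∀ k, 1 ≤ k → N (k + 1) < N k :=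
      fun k hk => lt_of_le_of_ne (hNmono k) (hc k hk)
    have hbound : ∀ m, N (m + 1) + m ≤ N 1 := by
      intro m
      induction m with
      | zero => simp
      | succ m ih =>
        have := hlt (m + 1) (by omega)
        omega
    have := hbound (N 1 + 1)
    omega
  have hKstab : ∀ i, UDk u g (K + 1) i = UDk u g K i := by
    have hptwise := (Finset.sum_eq_sum_iff_of_le
      (fun i (_ : i ∈ Finset.univ) => hncard_mono K i)).mp hKeq
    intro i
    exact Set.eq_of_subset_of_ncard_le (UDk_succ_subset u g K i)
      (le_of_eq (hptwise i (Finset.mem_univ i)).symm) (Set.toFinite _)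
  have hstabAll : ∀ k, K ≤ k → UDk u g k = UDk u g K := by
    intro k hk
    induction hk with
    | refl => rfl
    | @step k hk ih =>
      have : UDk u g (k + 1) = fun i => {si ∈ UDk u g k i | ¬ Dominated u g (UDk u g k) i si} :=
        rfl
      rw [this, ih]
      exact funext (hKstab)
  have hKsub : ∀ (k : ℕ) (i : I), UDk u g K i ⊆ UDk u g k i := by
    intro k i
    rcases le_or_gt k K with h | h
    · exact UDk_antitone u g h i
    · rw [hstabAll k h.le]
  have hinf_iff : ∀ s : ∀ i, S i, s ∈ UDinfSet u g ↔ ∀ i, s i ∈ UDk u g K i := by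
    intro s
    constructor
    · intro h i
      have := h i (K - 1)
      rwa [Nat.sub_add_cancel hK1] at this
    · intro h i k
      exact hKsub (k + 1) i (h i)
  refine ⟨fun i => UDk u g K i, ?_, ?_, ?_, ?_⟩
  · -- T1
    intro s hs
    have : g s ∈ g '' UDinfSet u g := ⟨s, (hinf_iff s).mpr hs, rfl⟩
    rw [himg] at this
    exact this
  · -- T2
    intro i
    have : Lottery.delta (f θ) ∈ g '' UDinfSet u g := by rw [himg]; exact rfl
    obtain ⟨s, hs, -⟩ := this
    exact ⟨s i, (hinf_iff s).mp hs i⟩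
  · -- T3
    intro i x
    set r : S i → S i → Prop := fun a b => ∀ s : ∀ j, S j, (∀ j, j ≠ i → s j ∈ UDk u g K j) →
      expUtil (u i) (g (Function.update s i b)) < expUtil (u i) (g (Function.update s i a))
      with hrdef
    -- a fixed profile with all coordinates surviving, to establish irreflexivity
    have hbase : ∃ s0 : ∀ j, S j, ∀ j, s0 j ∈ UDk u g K j := by
      have : Lottery.delta (f θ) ∈ g '' UDinfSet u g := by rw [himg]; exact rfl
      obtain ⟨s, hs, -⟩ := this
      exact ⟨s, (hinf_iff s).mp hs⟩
    obtain ⟨s0, hs0⟩ := hbase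
    haveI : IsTrans (S i) r :=
      ⟨fun a b c hab hbc s hs => lt_trans (hbc s hs) (hab s hs)⟩
    haveI : IsIrrefl (S i) r :=
      ⟨fun a ha => lt_irrefl _ (ha s0 (fun j _ => hs0 j))⟩
    have hwf : WellFounded r := Finite.wellFounded_of_trans_of_irrefl r
    -- an r-undominated strategy survives every round
    have all_rounds : ∀ x : S i, (¬ ∃ d, r d x) → ∀ k, x ∈ UDk u g k i := by
      intro x hx k
      induction k with
      | zero => exact Set.mem_univ _
      | succ k ih =>
        refine ⟨ih, ?_⟩
        rintro ⟨d, hd⟩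
        exact hx ⟨d, fun s hs => hd s (fun j hj => hKsub k j (hs j hj))⟩
    have main : ∀ x : S i, ∃ y, y ∈ UDk u g K i ∧ ∀ s : ∀ j, S j,
        (∀ j, j ≠ i → s j ∈ UDk u g K j) →
        expUtil (u i) (g (Function.update s i x)) ≤ expUtil (u i) (g (Function.update s i y)) := by
      intro x
      induction x using hwf.induction with
      | _ x ih =>
        by_cases hdom : ∃ d, r d x
        · obtain ⟨d, hdx⟩ := hdom
          obtain ⟨y, hy1, hy2⟩ := ih d hdx
          exact ⟨y, hy1, fun s hs => le_trans (le_of_lt (hdx s hs)) (hy2 s hs)⟩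
        · exact ⟨x, all_rounds x hdom K, fun s _ => le_refl _⟩
    exact main x
  · -- T4'
    intro p hnash i
    have hall : ∀ k, ∀ j, p j ∈ UDk u g k j := by
      intro k
      induction k with
      | zero => exact fun j => Set.mem_univ _
      | succ k ih =>
        intro j
        refine ⟨ih j, ?_⟩
        rintro ⟨d, hd⟩
        have := hd p (fun j' _ => ih j')
        rw [Function.update_eq_self] at this
        exact absurd (hnash j d) (not_le.mpr this)
    exact hall K i

end InstUDinf
section Easy

open Function Set

variable {I Z : Type} [Fintype I] [Fintype Z] [DecidableEq I] [DecidableEq Z]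

/-- The dictatorial mechanism: every agent's strategy set is `Z` and the outcome is the
dictator's announcement. -/
lemma easy_mech
    (hZ : 2 ≤ Fintype.card Z)
    (Θ : Set (I → Z → Z → Prop)) (Ω : Set (I → Z → ℝ)) (f : (I → Z → Z → Prop) → Z)
    (i₀ : I) (hd : Dictator Θ f i₀) :
    ∃ (S : I → Type) (_ : ∀ i, Finite (S i)) (_ : ∀ i, Nonempty (S i))
      (g : (∀ i, S i) → Lottery Z),
      (∀ s, ∃ z : Z, g s = Lottery.delta z) ∧ UDImplements Θ Ω f g ∧
        UDinfImplements Θ Ω f g := by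
  classical
  haveI : Nonempty Z := Fintype.card_pos_iff.mp (by omega)
  set g : (∀ _ : I, Z) → Lottery Z := fun s => Lottery.delta (s i₀) with hg
  have key : ∀ θ ∈ Θ, ∀ u ∈ Ω, Represents u θ →
      (∀ z, z ≠ f θ → u i₀ z < u i₀ (f θ)) := by
    intro θ hθ u _ hrep z hz
    obtain ⟨h1, h2⟩ := hd θ hθ z hz
    have hle : u i₀ z ≤ u i₀ (f θ) := (hrep i₀ (f θ) z).mp h1
    have : ¬ u i₀ (f θ) ≤ u i₀ z := fun h => h2 ((hrep i₀ z (f θ)).mpr h)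
    exact lt_of_le_of_ne hle (fun h => this (le_of_eq h.symm))
  have hcompute : ∀ (u : I → Z → ℝ) (i : I) (s : ∀ _ : I, Z) (si : Z),
      expUtil (u i) (g (Function.update s i si)) =
        u i (if i = i₀ then si else s i₀) := by
    intro u i s si
    show expUtil (u i) (Lottery.delta (Function.update s i si i₀)) = _
    by_cases hi : i = i₀
    · subst hi; rw [Function.update_self, expUtil_delta, if_pos rfl]
    · rw [Function.update_of_ne (Ne.symm hi), expUtil_delta, if_neg hi]
  have P : ∀ θ ∈ Θ, ∀ u ∈ Ω, Represents u θ → ∀ k : ℕ,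
      (∀ i, i ≠ i₀ → ∀ si : Z, si ∈ UDk u g k i) ∧ f θ ∈ UDk u g k i₀ := by
    intro θ hθ u hu hrep k
    induction k with
    | zero => exact ⟨fun _ _ _ => Set.mem_univ _, Set.mem_univ _⟩
    | succ k ih =>
      have hcond : ∀ i : I, ∀ j, j ≠ i → (fun _ => f θ : ∀ _ : I, Z) j ∈ UDk u g k j := by
        intro i j _
        by_cases hj : j = i₀
        · subst hj; exact ih.2
        · exact ih.1 j hj _
      constructor
      · intro i hi si
        refine ⟨ih.1 i hi si, ?_⟩
        rintro ⟨d, hdd⟩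
        have := hdd (fun _ => f θ) (hcond i)
        rw [hcompute, hcompute, if_neg hi, if_neg hi] at this
        exact lt_irrefl _ this
      · refine ⟨ih.2, ?_⟩
        rintro ⟨d, hdd⟩
        have := hdd (fun _ => f θ) (hcond i₀)
        rw [hcompute, hcompute, if_pos rfl, if_pos rfl] at this
        by_cases hdz : d = f θ
        · rw [hdz] at this; exact lt_irrefl _ this
        · exact lt_asymm this (key θ hθ u hu hrep d hdz)
  have Q : ∀ θ ∈ Θ, ∀ u ∈ Ω, Represents u θ → ∀ (si : Z) (k : ℕ),
      si ∈ UDk u g (k + 1) i₀ → si = f θ := by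
    intro θ hθ u hu hrep si k hsi
    by_contra hne
    refine hsi.2 ⟨f θ, ?_⟩
    intro s _
    rw [hcompute, hcompute, if_pos rfl, if_pos rfl]
    exact key θ hθ u hu hrep si hne
  refine ⟨fun _ => Z, fun _ => inferInstance, fun _ => inferInstance, g,
    fun s => ⟨s i₀, rfl⟩, ?_, ?_⟩
  · intro θ hθ u hu hrep
    apply Set.eq_singleton_iff_unique_mem.mpr
    constructor
    · refine ⟨fun _ => f θ, ?_, by rw [hg]⟩
      intro i
      by_cases hi : i = i₀
      · subst hi; exact (P θ hθ u hu hrep 1).2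
      · exact (P θ hθ u hu hrep 1).1 i hi _
    · rintro y ⟨s, hs, rfl⟩
      rw [hg]
      have := Q θ hθ u hu hrep (s i₀) 0 (hs i₀)
      show Lottery.delta (s i₀) = _
      rw [this]
  · intro θ hθ u hu hrep
    apply Set.eq_singleton_iff_unique_mem.mpr
    constructor
    · refine ⟨fun _ => f θ, ?_, by rw [hg]⟩
      intro i k
      by_cases hi : i = i₀
      · subst hi; exact (P θ hθ u hu hrep (k + 1)).2
      · exact (P θ hθ u hu hrep (k + 1)).1 i hi _
    · rintro y ⟨s, hs, rfl⟩
      rw [hg]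
      have := Q θ hθ u hu hrep (s i₀) 0 (hs i₀ 0)
      show Lottery.delta (s i₀) = _
      rw [this]
  
end Easy

/-- **Börgers (1995).** In any cardinal implementation problem with `f` surjective and
`Θ^una ∩ Θ^strict ⊆ Θ ⊆ Θ^strict`, the following are equivalent: (i) `f` can be
UD-implemented by a deterministic finite-action mechanism; (ii) `f` can be
UD^∞-implemented by a deterministic finite-action mechanism; (iii) `f` is dictatorial. -/
theorem borgers_deterministic
    {I Z : Type} [Fintype I] [Fintype Z] [DecidableEq I] [DecidableEq Z]
    (hI : 2 ≤ Fintype.card I) (hZ : 2 ≤ Fintype.card Z)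
    (Θ : Set (I → Z → Z → Prop)) (Ω : Set (I → Z → ℝ)) (f : (I → Z → Z → Prop) → Z)
    (hCIP : CIProblem Θ Ω)
    (hsurj : ∀ z : Z, ∃ θ ∈ Θ, f θ = z)
    (hsub1 : ThetaUna I Z ∩ ThetaStrict I Z ⊆ Θ) (hsub2 : Θ ⊆ ThetaStrict I Z) :
    ((∃ (S : I → Type) (_ : ∀ i, Finite (S i)) (_ : ∀ i, Nonempty (S i))
        (g : (∀ i, S i) → Lottery Z),
        (∀ s, ∃ z : Z, g s = Lottery.delta z) ∧ UDImplements Θ Ω f g) ↔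
      ∃ i : I, Dictator Θ f i) ∧
    ((∃ (S : I → Type) (_ : ∀ i, Finite (S i)) (_ : ∀ i, Nonempty (S i))
        (g : (∀ i, S i) → Lottery Z),
        (∀ s, ∃ z : Z, g s = Lottery.delta z) ∧ UDinfImplements Θ Ω f g) ↔
      ∃ i : I, Dictator Θ f i) := by
  constructor
  · constructor
    · rintro ⟨S, hfin, hne, g, hdet, himpl⟩
      haveI : ∀ i, Finite (S i) := hfin
      haveI : ∀ i, Nonempty (S i) := hne
      exact hard_core hZ Θ Ω f hCIP hsurj hsub1 hsub2 g hdet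
        (H_of_UD Θ Ω f g himpl)
    · rintro ⟨i₀, hd⟩
      obtain ⟨S, h1, h2, g, h3, h4, -⟩ := easy_mech hZ Θ Ω f i₀ hd
      exact ⟨S, h1, h2, g, h3, h4⟩
  · constructor
    · rintro ⟨S, hfin, hne, g, hdet, himpl⟩
      haveI : ∀ i, Finite (S i) := hfin
      haveI : ∀ i, Nonempty (S i) := hne
      exact hard_core hZ Θ Ω f hCIP hsurj hsub1 hsub2 g hdet
        (H_of_UDinf Θ Ω f g himpl)
    · rintro ⟨i₀, hd⟩
      obtain ⟨S, h1, h2, g, h3, -, h5⟩ := easy_mech hZ Θ Ω f i₀ hd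
      exact ⟨S, h1, h2, g, h3, h5⟩
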